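/- For n = 2, the map φ_2 : M_2(ℂ) → M_2(ℂ), A ↦ A + Aᵗ, has one-dimensional kernel spanned by the matrix e_{12} − e_{21}, and the first homology of A_o(2) with trivial coefficients H_1(A_o(2), ℂ) is one-dimensional. -/

import Mathlib

noncomputable section

/-- The linear map `A ↦ A + Aᵀ` on `2 × 2` complex matrices. -/
def phi2x2 : Matrix (Fin 2) (Fin 2) ℂ →ₗ[ℂ] Matrix (Fin 2) (Fin 2) ℂ where
  toFun A := A + A.transpose
  map_add' A B := by simp [Matrix.transpose_add]; abel
  map_smul' c A := by simp [Matrix.transpose_smul]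

/-! The complex computing `H_1(A_o(2), ℂ)` is `0 → ℂ → M₂(ℂ) → M₂(ℂ) → ℂ → 0` with zero outer
maps, so `H_1 = M₂(ℂ) ⧸ range φ₂`. Since `φ₂` is an endomorphism of a finite-dimensional space,
this cokernel has the dimension of `ker φ₂`, the skew-symmetric `2 × 2` matrices, which form the
line through `e₁₂ - e₂₁`. -/

open Matrix Module LinearMap

theorem LinearMap.finrank_quotient_range_eq_finrank_ker {K V : Type*} [DivisionRing K]
    [AddCommGroup V] [Module K V] [FiniteDimensional K V] (f : V →ₗ[K] V) :
    finrank K (V ⧸ range f) = finrank K (ker f) := by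
  have h := f.index_eq_of_finiteDimensional
  rw [index_eq_finrank_sub, sub_self] at h
  omega

theorem Matrix.single_zero_one_sub_single_one_zero_ne_zero {R : Type*} [Ring R] [Nontrivial R] :
    single (0 : Fin 2) (1 : Fin 2) (1 : R) - single 1 0 1 ≠ 0 := fun h => by
  simpa using congrFun (congrFun h 0) 1

theorem Matrix.transpose_eq_neg_iff_fin_two {R : Type*} [Ring R] [NoZeroDivisors R] [CharZero R]
    {A : Matrix (Fin 2) (Fin 2) R} :
    Aᵀ = -A ↔ ∃ c : R, c • (single (0 : Fin 2) (1 : Fin 2) (1 : R) - single 1 0 1) = A := by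
  constructor
  · intro h
    have hA (i j : Fin 2) : A j i = -A i j := congrFun (congrFun h i) j
    have h00 : A 0 0 = 0 := by simpa [eq_neg_iff_add_eq_zero] using hA 0 0
    have h11 : A 1 1 = 0 := by simpa [eq_neg_iff_add_eq_zero] using hA 1 1
    refine ⟨A 0 1, ?_⟩
    ext i j
    fin_cases i <;> fin_cases j <;> simp [h00, h11, hA 0 1]
  · rintro ⟨c, rfl⟩
    ext i j
    fin_cases i <;> fin_cases j <;> simp

theorem mem_ker_phi2x2_iff {A : Matrix (Fin 2) (Fin 2) ℂ} : A ∈ ker phi2x2 ↔ Aᵀ = -A :=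
  add_eq_zero_iff_eq_neg'

theorem ker_phi2x2 :
    ker phi2x2 = Submodule.span ℂ {single (0 : Fin 2) (1 : Fin 2) (1 : ℂ) - single 1 0 1} := by
  ext A
  rw [mem_ker_phi2x2_iff, transpose_eq_neg_iff_fin_two, Submodule.mem_span_singleton]

theorem ker_phi2x2_and_H1 :
    LinearMap.ker phi2x2 =
      Submodule.span ℂ
        {Matrix.single (0 : Fin 2) (1 : Fin 2) (1 : ℂ) -
          Matrix.single (1 : Fin 2) (0 : Fin 2) (1 : ℂ)} ∧
    Module.finrank ℂ (Matrix (Fin 2) (Fin 2) ℂ ⧸ LinearMap.range phi2x2) = 1 := by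
  refine ⟨ker_phi2x2, ?_⟩
  rw [finrank_quotient_range_eq_finrank_ker, ker_phi2x2,
    finrank_span_singleton single_zero_one_sub_single_one_zero_ne_zero]
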